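/- arXiv:2412.07974 — 5 statements merged into one kernel-verified Lean document; each statement's English description precedes it below -/
import Mathlib

section
/- Let a, b > 0 and n > a+b. Let A ⊆ C([n],a) and B ⊆ C([n],b) be cross-intersecting families. If b < a, or if b ≥ a and |B| ≤ C(n−b−1+a, a−1), then |A| + |B| ≤ C(n,a); moreover, this inequality is strict unless |B| = 0. -/
/-!
Replace `B` by the family `𝒢` of complements `[n] \ Y`, which has the same size and consists of
`(n - b)`-sets. An `a`-set inside a member of `𝒢` misses the corresponding member of `B`, so it is
not in `A`: thus `A` and the `a`-level iterated shadow of `𝒢` are disjoint families of `a`-sets,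
and it suffices that this shadow is strictly larger than `𝒢` whenever `B ≠ ∅`.

For `b < a` this is the iterated local LYM inequality, as `C(n, n - b) = C(n, b) < C(n, a)`.
For `a ≤ b`, put `m = n - b + a - 1`, so that the hypothesis reads `|𝒢| ≤ C(m, n - b)`. By
Kruskal–Katona we may replace `𝒢` by a colex initial segment of the same size; such a segment lives
on the first `m` points, where local LYM applies since `C(m, n - b) = C(m, a - 1) < C(m, a)`.
-/

/-- Two families are cross-intersecting if every member of the first intersects
every member of the second. -/
def CrossIntersecting (A B : Finset (Finset ℕ)) : Prop :=
  ∀ X ∈ A, ∀ Y ∈ B, (X ∩ Y).Nonempty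

open Finset
open scoped FinsetFamily

namespace Nat

theorem choose_lt_choose_succ_of_two_mul_add_one_lt {n r : ℕ} (h : 2 * r + 1 < n) :
    n.choose r < n.choose (r + 1) := by
  refine Nat.lt_of_mul_lt_mul_right (a := r + 1) ?_
  rw [choose_succ_right_eq]
  exact Nat.mul_lt_mul_of_pos_left (by omega) (choose_pos (by omega))

theorem choose_lt_choose_of_lt_of_two_mul_le {n i j : ℕ} (hij : i < j) (hj : 2 * j ≤ n) :
    n.choose i < n.choose j := by
  induction j, hij using Nat.le_induction with
  | base => exact choose_lt_choose_succ_of_two_mul_add_one_lt (by omega)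
  | succ j hij ih =>
    exact (ih (by omega)).trans (choose_lt_choose_succ_of_two_mul_add_one_lt (by omega))

theorem choose_lt_choose_of_lt_of_add_lt {n i j : ℕ} (hij : i < j) (h : i + j < n) :
    n.choose i < n.choose j := by
  rcases le_or_gt (2 * j) n with hj | hj
  · exact choose_lt_choose_of_lt_of_two_mul_le hij hj
  · rw [← choose_symm (by omega : j ≤ n)]
    exact choose_lt_choose_of_lt_of_two_mul_le (by omega) (by omega)

end Nat

namespace Finset

section Map
variable {α β : Type*}

theorem exists_map_eq_of_forall_subset_map {f : α ↪ β} {s : Finset α} {𝒜 : Finset (Finset β)}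
    (h : ∀ X ∈ 𝒜, X ⊆ s.map f) :
    ∃ 𝒜' : Finset (Finset α), 𝒜'.map (mapEmbedding f).toEmbedding = 𝒜 := by
  suffices 𝒜 ⊆ s.powerset.map (mapEmbedding f).toEmbedding by
    obtain ⟨𝒜', -, rfl⟩ := subset_map_iff.1 this
    exact ⟨𝒜', rfl⟩
  intro X hX
  obtain ⟨u, hu, rfl⟩ := subset_map_iff.1 (h X hX)
  exact mem_map_of_mem _ (mem_powerset.2 hu)

theorem exists_fin_map_eq_of_subset_powersetCard {V : Finset β} {r : ℕ} {𝒜 : Finset (Finset β)}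
    (h𝒜 : 𝒜 ⊆ powersetCard r V) :
    ∃ (e : Fin #V ↪ β) (𝒜' : Finset (Finset (Fin #V))),
      (𝒜' : Set (Finset (Fin #V))).Sized r ∧ 𝒜'.map (mapEmbedding e).toEmbedding = 𝒜 := by
  set e : Fin #V ↪ β := V.equivFin.symm.toEmbedding.trans (Function.Embedding.subtype _)
  have he : univ.map e = V := by
    rw [← map_map, map_univ_equiv, univ_eq_attach, attach_map_val]
  obtain ⟨𝒜', rfl⟩ := exists_map_eq_of_forall_subset_map (f := e) (s := univ)
    fun X hX ↦ by rw [he]; exact (mem_powersetCard.1 (h𝒜 hX)).1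
  refine ⟨e, 𝒜', fun X hX ↦ ?_, rfl⟩
  simpa using (mem_powersetCard.1 (h𝒜 (mem_map_of_mem _ hX))).2

variable [DecidableEq α] [DecidableEq β]

theorem map_shadow (f : α ↪ β) (𝒜 : Finset (Finset α)) :
    (∂ 𝒜).map (mapEmbedding f).toEmbedding = ∂ (𝒜.map (mapEmbedding f).toEmbedding) := by
  ext t
  simp only [mem_map, mem_shadow_iff, RelEmbedding.coe_toEmbedding, mapEmbedding_apply]
  constructor
  · rintro ⟨_, ⟨s, hs, a, ha, rfl⟩, rfl⟩
    exact ⟨s.map f, ⟨s, hs, rfl⟩, f a, mem_map_of_mem f ha, (map_erase f s a).symm⟩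
  · rintro ⟨_, ⟨s, hs, rfl⟩, _, hb, rfl⟩
    obtain ⟨a, ha, rfl⟩ := mem_map.1 hb
    exact ⟨s.erase a, ⟨s, hs, a, ha, rfl⟩, map_erase f s a⟩

theorem map_shadow_iterate (f : α ↪ β) (𝒜 : Finset (Finset α)) (t : ℕ) :
    (∂^[t] 𝒜).map (mapEmbedding f).toEmbedding = ∂^[t] (𝒜.map (mapEmbedding f).toEmbedding) :=
  (show Function.Semiconj (fun 𝒜 ↦ 𝒜.map (mapEmbedding f).toEmbedding) shadow shadow from
    map_shadow f).iterate_right t 𝒜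

end Map

section LYM
variable {α : Type*} [DecidableEq α] [Fintype α] {𝒜 : Finset (Finset α)} {r t : ℕ}

theorem card_div_choose_le_card_shadow_iterate_div_choose {𝕜 : Type*} [Semifield 𝕜]
    [LinearOrder 𝕜] [IsStrictOrderedRing 𝕜] (h𝒜 : (𝒜 : Set (Finset α)).Sized r) (ht : t ≤ r) :
    (#𝒜 : 𝕜) / (Fintype.card α).choose r ≤ #(∂^[t] 𝒜) / (Fintype.card α).choose (r - t) := by
  induction t with
  | zero => rfl
  | succ t ih =>
    rw [Function.iterate_succ_apply', show r - (t + 1) = r - t - 1 by omega]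
    exact (ih (by omega)).trans
      (card_div_choose_le_card_shadow_div_choose (by omega) h𝒜.shadow_iterate)

theorem card_lt_card_shadow_iterate (h𝒜 : (𝒜 : Set (Finset α)).Sized r) (h𝒜₀ : 𝒜.Nonempty)
    (ht : t ≤ r) (hchoose : (Fintype.card α).choose r < (Fintype.card α).choose (r - t)) :
    #𝒜 < #(∂^[t] 𝒜) := by
  obtain ⟨s, hs⟩ := h𝒜₀
  have hpos : 0 < (Fintype.card α).choose r := Nat.choose_pos (h𝒜 hs ▸ card_le_univ s)
  have hLYM : #𝒜 * (Fintype.card α).choose (r - t) ≤ #(∂^[t] 𝒜) * (Fintype.card α).choose r := by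
    have := card_div_choose_le_card_shadow_iterate_div_choose (𝕜 := ℚ) h𝒜 ht
    rw [div_le_div_iff₀ (by exact_mod_cast hpos) (by exact_mod_cast hpos.trans hchoose)] at this
    exact_mod_cast this
  have h𝒜pos : 0 < #𝒜 := card_pos.2 ⟨s, hs⟩
  by_contra! hle
  nlinarith [Nat.mul_le_mul_right ((Fintype.card α).choose r) hle]

variable {β : Type*} [DecidableEq β] {V : Finset β} {ℬ : Finset (Finset β)}

theorem shadow_iterate_subset_powersetCard (hℬ : ℬ ⊆ powersetCard r V) (t : ℕ) :
    ∂^[t] ℬ ⊆ powersetCard (r - t) V := by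
  intro s hs
  obtain ⟨u, hu, hsu, hcard⟩ := mem_shadow_iterate_iff_exists_sdiff.1 hs
  obtain ⟨huV, hur⟩ := mem_powersetCard.1 (hℬ hu)
  refine mem_powersetCard.2 ⟨hsu.trans huV, ?_⟩
  rw [card_sdiff_of_subset hsu] at hcard
  have := card_le_card hsu
  omega

theorem card_lt_card_shadow_iterate_of_subset_powersetCard (hℬ : ℬ ⊆ powersetCard r V)
    (hℬ₀ : ℬ.Nonempty) (ht : t ≤ r) (hchoose : (#V).choose r < (#V).choose (r - t)) :
    #ℬ < #(∂^[t] ℬ) := by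
  obtain ⟨e, 𝒜, h𝒜, rfl⟩ := exists_fin_map_eq_of_subset_powersetCard hℬ
  rw [← map_shadow_iterate, card_map, card_map]
  exact card_lt_card_shadow_iterate h𝒜 (map_nonempty.1 hℬ₀) ht (by simpa using hchoose)

end LYM

namespace Colex
variable {α : Type*} [LinearOrder α] {𝒞 : Finset (Finset α)} {r : ℕ}

theorem IsInitSeg.subset_of_card_le_choose (h𝒞 : IsInitSeg 𝒞 r) {W : Finset α}
    (hW : IsLowerSet (W : Set α)) (hcard : #𝒞 ≤ (#W).choose r) {s : Finset α} (hs : s ∈ 𝒞) :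
    s ⊆ W := by
  by_contra hsW
  obtain ⟨v, hvs, hvW⟩ := not_subset.1 hsW
  -- `v ∉ W` exceeds every element of the lower set `W`, so all `r`-subsets of `W` precede `s`
  have hbelow : powersetCard r W ⊆ 𝒞 := fun u hu ↦ by
    obtain ⟨huW, hur⟩ := mem_powersetCard.1 hu
    refine h𝒞.2 hs ⟨toColex_lt_toColex_iff_exists_forall_lt.2
      ⟨v, hvs, fun hvu ↦ hvW (huW hvu), fun b hb _ ↦ ?_⟩, hur⟩
    exact lt_of_not_ge fun hvb ↦ hvW (hW hvb (huW hb))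
  have hsW' : s ∉ powersetCard r W := fun h ↦ hsW (mem_powersetCard.1 h).1
  have := card_le_card (insert_subset hs hbelow)
  rw [card_insert_of_notMem hsW', card_powersetCard] at this
  omega

theorem exists_isInitSeg_card_eq [Fintype α] {s : ℕ} (hs : s ≤ (Fintype.card α).choose r) :
    ∃ 𝒞 : Finset (Finset α), IsInitSeg 𝒞 r ∧ #𝒞 = s := by
  induction s with
  | zero => exact ⟨∅, isInitSeg_empty, card_empty⟩
  | succ s ih =>
    obtain ⟨𝒞, h𝒞, rfl⟩ := ih (by omega)
    have h𝒞r : 𝒞 ⊆ powersetCard r univ := fun u hu ↦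
      mem_powersetCard.2 ⟨subset_univ u, h𝒞.1 hu⟩
    have hrest : (powersetCard r univ \ 𝒞).Nonempty := by
      rw [← card_pos, card_sdiff_of_subset h𝒞r, card_powersetCard, card_univ]
      omega
    obtain ⟨u, hu, humin⟩ := exists_min_image _ toColex hrest
    obtain ⟨hur, hu𝒞⟩ := mem_sdiff.1 hu
    refine ⟨insert u 𝒞, ⟨?_, fun w v hw ⟨hvw, hvr⟩ ↦ ?_⟩, card_insert_of_notMem hu𝒞⟩
    · rintro w hw
      obtain rfl | hw := mem_insert.1 hw
      · exact (mem_powersetCard.1 hur).2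
      · exact h𝒞.1 hw
    obtain rfl | hw := mem_insert.1 hw
    · by_contra hv
      have := humin v (mem_sdiff.2 ⟨mem_powersetCard.2 ⟨subset_univ v, hvr⟩,
        fun h ↦ hv (mem_insert_of_mem h)⟩)
      exact this.not_gt hvw
    · exact mem_insert_of_mem (h𝒞.2 hw ⟨hvw, hvr⟩)

end Colex

variable {β : Type*} [DecidableEq β] {V : Finset β} {r : ℕ}

theorem card_lt_card_shadow_iterate_of_card_le_choose {k a : ℕ} {𝒢 : Finset (Finset β)}
    (h𝒢 : 𝒢 ⊆ powersetCard k V) (h𝒢₀ : 𝒢.Nonempty) (ha : 0 < a) (hak : a < k)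
    (hV : k + a - 1 ≤ #V) (hcard : #𝒢 ≤ (k + a - 1).choose k) :
    #𝒢 < #(∂^[k - a] 𝒢) := by
  obtain ⟨e, 𝒢, h𝒢', rfl⟩ := exists_fin_map_eq_of_subset_powersetCard h𝒢
  rw [card_map] at hcard
  rw [← map_shadow_iterate, card_map, card_map]
  set m := k + a - 1
  set W : Finset (Fin #V) := (range m).attachFin fun i hi ↦ by rw [mem_range] at hi; omega
  have hWcard : #W = m := by simp [W]
  have hW : IsLowerSet (W : Set (Fin #V)) := fun i j hji hj ↦ by
    simp only [W, coe_attachFin, coe_range, Set.mem_preimage, Set.mem_Iio] at hj ⊢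
    exact lt_of_le_of_lt hji hj
  obtain ⟨𝒞, h𝒞, h𝒞card⟩ := Colex.exists_isInitSeg_card_eq (α := Fin #V) (r := k) (s := #𝒢)
    (by simpa using hcard.trans (Nat.choose_le_choose k hV))
  have h𝒞W : 𝒞 ⊆ powersetCard k W := fun s hs ↦ mem_powersetCard.2
    ⟨h𝒞.subset_of_card_le_choose hW (by rw [hWcard, h𝒞card]; exact hcard) hs, h𝒞.1 hs⟩
  have hchoose : m.choose k < m.choose (k - (k - a)) := by
    rw [Nat.choose_symm_of_eq_add (show m = k + (a - 1) by omega), show k - (k - a) = a by omega]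
    exact Nat.choose_lt_choose_of_lt_of_add_lt (by omega) (by omega)
  calc #𝒢 = #𝒞 := h𝒞card.symm
    _ < #(∂^[k - a] 𝒞) := card_lt_card_shadow_iterate_of_subset_powersetCard h𝒞W
        (card_pos.1 (h𝒞card ▸ card_pos.2 (map_nonempty.1 h𝒢₀))) (by omega) (by rwa [hWcard])
    _ ≤ #(∂^[k - a] 𝒢) := iterated_kk h𝒢' h𝒞card.le h𝒞

theorem image_sdiff_subset_powersetCard {ℬ : Finset (Finset β)} (hℬ : ℬ ⊆ powersetCard r V) :
    ℬ.image (V \ ·) ⊆ powersetCard (#V - r) V := by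
  intro s hs
  obtain ⟨u, hu, rfl⟩ := mem_image.1 hs
  obtain ⟨huV, hur⟩ := mem_powersetCard.1 (hℬ hu)
  exact mem_powersetCard.2 ⟨sdiff_subset, by rw [card_sdiff_of_subset huV, hur]⟩

theorem card_image_sdiff {ℬ : Finset (Finset β)} (hℬ : ∀ s ∈ ℬ, s ⊆ V) :
    #(ℬ.image (V \ ·)) = #ℬ :=
  card_image_of_injOn fun s hs u hu hsu ↦ by
    rw [← sdiff_sdiff_eq_self (hℬ s hs), ← sdiff_sdiff_eq_self (hℬ u hu)]
    exact congrArg (V \ ·) hsu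

end Finset

theorem CrossIntersecting.disjoint_shadow_iterate_image_sdiff {A B : Finset (Finset ℕ)}
    (h : CrossIntersecting A B) (V : Finset ℕ) (t : ℕ) :
    Disjoint A (∂^[t] (B.image (V \ ·))) := by
  refine disjoint_left.2 fun S hSA hS ↦ ?_
  obtain ⟨_, hC, hSC, -⟩ := mem_shadow_iterate_iff_exists_sdiff.1 hS
  obtain ⟨Y, hY, rfl⟩ := mem_image.1 hC
  obtain ⟨x, hx⟩ := h S hSA Y hY
  exact (mem_sdiff.1 (hSC (mem_inter.1 hx).1)).2 (mem_inter.1 hx).2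

theorem CrossIntersecting.card_add_card_shadow_iterate_image_sdiff_le {A B : Finset (Finset ℕ)}
    (h : CrossIntersecting A B) {V : Finset ℕ} {a b : ℕ} (hA : A ⊆ powersetCard a V)
    (hB : B ⊆ powersetCard b V) (hab : a + b ≤ #V) :
    #A + #(∂^[#V - b - a] (B.image (V \ ·))) ≤ (#V).choose a := by
  have hD : ∂^[#V - b - a] (B.image (V \ ·)) ⊆ powersetCard a V := by
    simpa [show #V - b - (#V - b - a) = a by omega] using
      shadow_iterate_subset_powersetCard (image_sdiff_subset_powersetCard hB) (#V - b - a)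
  calc _ = #(A ∪ ∂^[#V - b - a] (B.image (V \ ·))) :=
        (card_union_of_disjoint (h.disjoint_shadow_iterate_image_sdiff V _)).symm
    _ ≤ #(powersetCard a V) := card_le_card (union_subset hA hD)
    _ = (#V).choose a := card_powersetCard a V

theorem stmt12_general (n a b : ℕ) (ha : 0 < a) (hn : a + b < n)
    (A B : Finset (Finset ℕ))
    (hA : A ⊆ Finset.powersetCard a (Finset.Icc 1 n))
    (hB : B ⊆ Finset.powersetCard b (Finset.Icc 1 n))
    (hcross : CrossIntersecting A B)
    (hcond : b < a ∨ (a ≤ b ∧ B.card ≤ (n - b - 1 + a).choose (a - 1))) :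
    A.card + B.card ≤ n.choose a ∧
      (B.card ≠ 0 → A.card + B.card < n.choose a) := by
  set V := Icc 1 n
  have hV : #V = n := by simp [V]
  have hsum := hcross.card_add_card_shadow_iterate_image_sdiff_le hA hB (by omega)
  rw [hV] at hsum
  set 𝒢 := B.image (V \ ·)
  have h𝒢 : 𝒢 ⊆ powersetCard (n - b) V := hV ▸ image_sdiff_subset_powersetCard hB
  have h𝒢B : #𝒢 = #B := card_image_sdiff fun Y hY ↦ (mem_powersetCard.1 (hB hY)).1
  have hgrow : #B ≠ 0 → #B < #(∂^[n - b - a] 𝒢) := fun hB₀ ↦ by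
    replace hB₀ := card_ne_zero.1 hB₀
    rw [← h𝒢B]
    rcases hcond with hba | ⟨hab, hcard⟩
    · refine card_lt_card_shadow_iterate_of_subset_powersetCard h𝒢 (hB₀.image _) (by omega) ?_
      rw [hV, Nat.choose_symm (by omega), show n - b - (n - b - a) = a by omega]
      exact Nat.choose_lt_choose_of_lt_of_add_lt hba (by omega)
    · have hm : n - b + a - 1 ≤ #V := by omega
      refine card_lt_card_shadow_iterate_of_card_le_choose h𝒢 (hB₀.image _) ha (by omega) hm ?_
      rwa [h𝒢B, show n - b + a - 1 = n - b - 1 + a by omega,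
        Nat.choose_symm_of_eq_add (show n - b - 1 + a = (n - b) + (a - 1) by omega)]
  refine ⟨?_, fun hB₀ ↦ by linarith [hgrow hB₀]⟩
  rcases eq_or_ne #B 0 with hB₀ | hB₀
  · omega
  · linarith [hgrow hB₀]

theorem stmt12 (n a b : ℕ) (ha : 0 < a) (hb : 0 < b) (hn : a + b < n)
    (A B : Finset (Finset ℕ))
    (hA : A ⊆ Finset.powersetCard a (Finset.Icc 1 n))
    (hB : B ⊆ Finset.powersetCard b (Finset.Icc 1 n))
    (hcross : CrossIntersecting A B)
    (hcond : b < a ∨ (a ≤ b ∧ B.card ≤ (n - b - 1 + a).choose (a - 1))) :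
    A.card + B.card ≤ n.choose a ∧
      (B.card ≠ 0 → A.card + B.card < n.choose a) :=
  stmt12_general n a b ha hn A B hA hB hcross hcond
end

section
/- Let k, s, m be integers with m > 2s and k ≥ 2. The family F_2^s := {F ∈ C([m],k−1) : F∩[s] ≠ ∅ and F∩[s+1,2s] ≠ ∅} satisfies |F_2^s| = Σ_{q=1}^{s} ( C(m−q, k−2) − C(m−s−q, k−2) ). -/
open Finset

/-- Counting subsets of `U` avoiding `S`. -/
lemma avoid_count (r : ℕ) (U S : Finset ℕ) :
    ((Finset.powersetCard r U).filter (fun A => ¬(A ∩ S).Nonempty)).card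
      = (U \ S).card.choose r := by
  rw [← Finset.card_powersetCard]
  congr 1
  ext A
  simp only [Finset.mem_filter, Finset.mem_powersetCard,
    Finset.not_nonempty_iff_eq_empty, ← Finset.disjoint_iff_inter_eq_empty,
    Finset.subset_sdiff]
  tauto

/-- Counting subsets of `U` avoiding both `S` and `T`. -/
lemma avoid2_count (r : ℕ) (U S T : Finset ℕ) :
    ((Finset.powersetCard r U).filter
        (fun A => ¬(A ∩ S).Nonempty ∧ ¬(A ∩ T).Nonempty)).card
      = (U \ (S ∪ T)).card.choose r := by
  rw [← Finset.card_powersetCard]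
  congr 1
  ext A
  simp only [Finset.mem_filter, Finset.mem_powersetCard,
    Finset.not_nonempty_iff_eq_empty, ← Finset.disjoint_iff_inter_eq_empty,
    Finset.subset_sdiff, Finset.disjoint_union_right]
  tauto

/-- Telescoping hockey-stick sum. -/
lemma tele_sum (n r : ℕ) : ∀ s, s ≤ n →
    (∑ q ∈ Finset.Icc 1 s, ((n - q).choose r : ℤ))
      = (n.choose (r + 1) : ℤ) - ((n - s).choose (r + 1) : ℤ) := by
  intro s
  induction s with
  | zero => simp
  | succ t ih =>
    intro hst
    rw [Finset.sum_Icc_succ_top (by omega : 1 ≤ t + 1), ih (by omega)]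
    have h1 : n - t = (n - (t + 1)) + 1 := by omega
    rw [h1, Nat.choose_succ_succ']
    push_cast
    ring

/-- `F_2^s`, the largest family of `(k-1)`-subsets of `[m]` cross-intersecting with
`T_2^s = {[s], [s+1,2s]}`. -/
def F2fam (m k s : ℕ) : Finset (Finset ℕ) :=
  (Finset.powersetCard (k - 1) (Finset.Icc 1 m)).filter
    (fun A => (A ∩ Finset.Icc 1 s).Nonempty ∧ (A ∩ Finset.Icc (s + 1) (2 * s)).Nonempty)

theorem stmt15 (m k s : ℕ) (hk : 2 ≤ k) (hm : 2 * s < m) :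
    ((F2fam m k s).card : ℤ) =
      ∑ q ∈ Finset.Icc 1 s,
        (((m - q).choose (k - 2) : ℤ) - ((m - s - q).choose (k - 2) : ℤ)) := by
  classical
  set P := Finset.powersetCard (k - 1) (Finset.Icc 1 m) with hP
  set p : Finset ℕ → Prop := fun A => (A ∩ Finset.Icc 1 s).Nonempty with hp
  set q : Finset ℕ → Prop := fun A => (A ∩ Finset.Icc (s + 1) (2 * s)).Nonempty with hq
  -- inclusion-exclusion setup
  have hsplit : (F2fam m k s).card +
      (P.filter (fun A => ¬(p A ∧ q A))).card = P.card := by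
    exact Finset.card_filter_add_card_filter_not _
  have hunion : P.filter (fun A => ¬(p A ∧ q A))
      = P.filter (fun A => ¬ p A) ∪ P.filter (fun A => ¬ q A) := by
    rw [← Finset.filter_or]
    apply Finset.filter_congr
    intro A _
    tauto
  have hinter : P.filter (fun A => ¬ p A) ∩ P.filter (fun A => ¬ q A)
      = P.filter (fun A => ¬ p A ∧ ¬ q A) := by
    rw [← Finset.filter_and]
  have hcards : (P.filter (fun A => ¬ p A) ∪ P.filter (fun A => ¬ q A)).card
      + (P.filter (fun A => ¬ p A ∧ ¬ q A)).card
      = (P.filter (fun A => ¬ p A)).card + (P.filter (fun A => ¬ q A)).card := by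
    rw [← hinter]
    exact Finset.card_union_add_card_inter _ _
  -- compute the pieces
  have hPcard : P.card = m.choose (k - 1) := by
    rw [hP, Finset.card_powersetCard, Nat.card_Icc]
    congr 1
  have hnp : (P.filter (fun A => ¬ p A)).card = (m - s).choose (k - 1) := by
    simp only [hP, hp]
    rw [avoid_count]
    congr 1
    rw [Finset.card_sdiff_of_subset (Finset.Icc_subset_Icc le_rfl (by omega))]
    simp [Nat.card_Icc]
  have hnq : (P.filter (fun A => ¬ q A)).card = (m - s).choose (k - 1) := by
    simp only [hP, hq]
    rw [avoid_count]
    congr 1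
    rcases Nat.eq_zero_or_pos s with hs | hs
    · subst hs; simp
    rw [Finset.card_sdiff_of_subset (Finset.Icc_subset_Icc (by omega) (by omega))]
    simp only [Nat.card_Icc]
    omega
  have hnpq : (P.filter (fun A => ¬ p A ∧ ¬ q A)).card = (m - 2 * s).choose (k - 1) := by
    simp only [hP, hp, hq]
    rw [avoid2_count]
    congr 1
    have hu : Finset.Icc 1 s ∪ Finset.Icc (s + 1) (2 * s) = Finset.Icc 1 (2 * s) := by
      ext x
      simp only [Finset.mem_union, Finset.mem_Icc]
      omega
    rw [hu, Finset.card_sdiff_of_subset (Finset.Icc_subset_Icc le_rfl (by omega))]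
    simp [Nat.card_Icc]
  -- LHS value
  have hL : ((F2fam m k s).card : ℤ)
      = (m.choose (k - 1) : ℤ) - 2 * ((m - s).choose (k - 1) : ℤ)
        + ((m - 2 * s).choose (k - 1) : ℤ) := by
    have e1 : (F2fam m k s).card +
        (P.filter (fun A => ¬ p A) ∪ P.filter (fun A => ¬ q A)).card = P.card := by
      rw [← hunion]; exact hsplit
    have := hcards
    rw [hPcard] at e1
    rw [hnp, hnq, hnpq] at this
    have e1' := congrArg (Nat.cast (R := ℤ)) e1
    have e2' := congrArg (Nat.cast (R := ℤ)) this
    push_cast at e1' e2'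
    linarith
  -- RHS value via telescoping
  rw [hL, Finset.sum_sub_distrib]
  have hk2 : k - 1 = (k - 2) + 1 := by omega
  rw [tele_sum m (k - 2) s (by omega), tele_sum (m - s) (k - 2) s (by omega), hk2]
  have h2s : m - s - s = m - 2 * s := by omega
  rw [h2s]
  ring
end

section
/- Let k, s and m ≥ k+s be integers with k ≥ 4. Let H ⊆ C([m],s) be a family of size z ≥ 2 which is minimal with respect to common intersection and satisfies ∩_{H∈H} H = ∅, and let F := {F ∈ C([m],k−1) : F∩H ≠ ∅ for every H ∈ H}. Then |F| ≤ f(z), where f(z) := Σ_{q=1}^{z−1} ( C(m−q,k−2) − C(m−s−1,k−2) ) + Σ_{q=z}^{s} ( C(m−q,k−2) − C(m−s−2−q+z, k−2) ). -/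
/-- The common intersection `∩_{A ∈ M} A` of a family of subsets of `[m]`. -/
def famInter (m : ℕ) (M : Finset (Finset ℕ)) : Finset ℕ :=
  (Finset.Icc 1 m).filter (fun x => ∀ A ∈ M, x ∈ A)

/-- `M` is minimal w.r.t. common intersection: removing any member strictly increases
the common intersection. -/
def MinimalWrtCommonInt (m : ℕ) (M : Finset (Finset ℕ)) : Prop :=
  ∀ M' ∈ M, (famInter m M).card < (famInter m (M.erase M')).card

/-- The maximal family of `(k-1)`-subsets of `[m]` cross-intersecting with `H`. -/
def maxCross (m k : ℕ) (H : Finset (Finset ℕ)) : Finset (Finset ℕ) :=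
  (Finset.powersetCard (k - 1) (Finset.Icc 1 m)).filter
    (fun A => ∀ B ∈ H, (A ∩ B).Nonempty)

open Finset in


lemma helperCount (m k : ℕ) (hk : 2 ≤ k) (S : Finset (Finset ℕ)) (a : ℕ) (P j : Finset ℕ)
    (haj : a ∉ j)
    (hmem : ∀ F ∈ S, F ⊆ Finset.Icc 1 m ∧ F.card = k - 1 ∧ a ∈ F ∧ (F ∩ j).Nonempty ∧
      ∀ y ∈ F, y ≠ a → y ∉ P) :
    S.card + ((Finset.Icc 1 m \ (P ∪ j)).card.choose (k - 2)) ≤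
      ((Finset.Icc 1 m \ P).card.choose (k - 2)) := by
  classical
  set T := Finset.powersetCard (k-2) (Finset.Icc 1 m \ P) with hT
  set D := Finset.powersetCard (k-2) (Finset.Icc 1 m \ (P ∪ j)) with hD
  set I := S.image (fun F => F.erase a) with hI
  have hIT : I ⊆ T := by
    intro G hG
    simp only [hI, mem_image] at hG
    obtain ⟨F, hF, rfl⟩ := hG
    obtain ⟨hFsub, hFcard, haF, _, hFP⟩ := hmem F hF
    rw [hT, mem_powersetCard]
    constructor
    · intro y hy
      rw [mem_erase] at hy
      rw [mem_sdiff]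
      exact ⟨hFsub hy.2, hFP y hy.2 hy.1⟩
    · rw [card_erase_of_mem haF, hFcard]; omega
  have hDT : D ⊆ T := by
    apply powersetCard_mono
    exact sdiff_subset_sdiff le_rfl subset_union_left
  have hdisj : Disjoint I D := by
    rw [disjoint_left]
    intro G hG hGD
    simp only [hI, mem_image] at hG
    obtain ⟨F, hF, rfl⟩ := hG
    obtain ⟨hFsub, hFcard, haF, ⟨b, hb⟩, hFP⟩ := hmem F hF
    rw [mem_inter] at hb
    have hba : b ≠ a := fun h => haj (h ▸ hb.2)
    have hbG : b ∈ F.erase a := mem_erase.mpr ⟨hba, hb.1⟩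
    rw [hD, mem_powersetCard] at hGD
    have := hGD.1 hbG
    rw [mem_sdiff, mem_union] at this
    exact this.2 (Or.inr hb.2)
  have hcardI : I.card = S.card := by
    rw [hI]
    apply card_image_of_injOn
    intro F1 h1 F2 h2 he
    simp only at he
    have ha1 := (hmem F1 h1).2.2.1
    have ha2 := (hmem F2 h2).2.2.1
    ext y
    by_cases hy : y = a
    · subst hy; simp [ha1, ha2]
    · constructor
      · intro h; have : y ∈ F1.erase a := mem_erase.mpr ⟨hy, h⟩
        rw [he] at this; exact (mem_erase.mp this).2
      · intro h; have : y ∈ F2.erase a := mem_erase.mpr ⟨hy, h⟩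
        rw [← he] at this; exact (mem_erase.mp this).2
  calc S.card + (Finset.Icc 1 m \ (P ∪ j)).card.choose (k - 2)
      = I.card + D.card := by rw [hcardI, hD, card_powersetCard]
    _ = (I ∪ D).card := (card_union_of_disjoint hdisj).symm
    _ ≤ T.card := card_le_card (union_subset hIT hDT)
    _ = (Finset.Icc 1 m \ P).card.choose (k - 2) := by rw [hT, card_powersetCard]


lemma mem_famInter {m : ℕ} {M : Finset (Finset ℕ)} {y : ℕ} :
    y ∈ famInter m M ↔ y ∈ Finset.Icc 1 m ∧ ∀ A ∈ M, y ∈ A := by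
  simp [famInter]


open Finset in
theorem stmt17 (m k s z : ℕ) (hk : 4 ≤ k) (hm : k + s ≤ m)
    (H : Finset (Finset ℕ)) (hH : H ⊆ Finset.powersetCard s (Finset.Icc 1 m))
    (hz : H.card = z) (hz2 : 2 ≤ z)
    (hempty : famInter m H = ∅) (hmin : MinimalWrtCommonInt m H) :
    ((maxCross m k H).card : ℤ) ≤
      (∑ q ∈ Finset.Icc 1 (z - 1),
        (((m - q).choose (k - 2) : ℤ) - ((m - s - 1).choose (k - 2) : ℤ))) +
      (∑ q ∈ Finset.Icc z s,
        (((m - q).choose (k - 2) : ℤ) -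
          ((((m : ℤ) + z - s - 2 - q).toNat).choose (k - 2) : ℤ))) := by
  classical
  obtain ⟨B₀, hB₀⟩ : ∃ B, B ∈ H := Finset.card_pos.mp (by omega) |>.exists_mem
  have hsub : ∀ B ∈ H, B ⊆ Finset.Icc 1 m ∧ B.card = s := by
    intro B hB
    exact Finset.mem_powersetCard.mp (hH hB)
  set x : Finset ℕ → ℕ := fun B =>
    if h : (famInter m (H.erase B)).Nonempty then h.choose else 0 with hxdef
  have hx : ∀ B ∈ H, x B ∈ famInter m (H.erase B) := by
    intro B hB
    have h1 := hmin B hB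
    rw [hempty] at h1
    simp only [card_empty] at h1
    have hne : (famInter m (H.erase B)).Nonempty := Finset.card_pos.mp (by omega)
    rw [hxdef]
    simp only [hne, dif_pos]
    exact hne.choose_spec
  have hxIcc : ∀ B ∈ H, x B ∈ Finset.Icc 1 m := fun B hB => (mem_famInter.mp (hx B hB)).1
  have hxo : ∀ B ∈ H, ∀ B' ∈ H, B' ≠ B → x B ∈ B' := by
    intro B hB B' hB' hne
    exact (mem_famInter.mp (hx B hB)).2 B' (mem_erase.mpr ⟨hne, hB'⟩)
  have hxn : ∀ B ∈ H, x B ∉ B := by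
    intro B hB hmem
    have : x B ∈ famInter m H := by
      rw [mem_famInter]
      refine ⟨hxIcc B hB, fun A hA => ?_⟩
      by_cases h : A = B
      · exact h ▸ hmem
      · exact hxo B hB A hA h
    rw [hempty] at this
    exact absurd this (Finset.notMem_empty _)
  have hxinj : ∀ B ∈ H, ∀ B' ∈ H, x B = x B' → B = B' := by
    intro B hB B' hB' he
    by_contra hne
    exact hxn B' hB' (he ▸ hxo B hB B' hB' (Ne.symm hne))
  -- the set X
  set X : Finset ℕ := (H.erase B₀).image x with hXdef
  have hXB0 : X ⊆ B₀ := by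
    intro y hy
    rw [hXdef, mem_image] at hy
    obtain ⟨B, hB, rfl⟩ := hy
    rw [mem_erase] at hB
    exact hxo B hB.2 B₀ hB₀ (Ne.symm hB.1)
  have hXcard : X.card = z - 1 := by
    rw [hXdef, card_image_of_injOn, card_erase_of_mem hB₀, hz]
    intro B hB B' hB' he
    exact hxinj B (mem_of_mem_erase hB) B' (mem_of_mem_erase hB') he
  have hB₀card : B₀.card = s := (hsub B₀ hB₀).2
  have hB₀Icc : B₀ ⊆ Finset.Icc 1 m := (hsub B₀ hB₀).1
  have hzs : z - 1 ≤ s := by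
    rw [← hXcard, ← hB₀card]
    exact card_le_card hXB0
  -- the enumeration list
  set l1 : List ℕ := X.sort (· ≤ ·) with hl1
  set l2 : List ℕ := (B₀ \ X).sort (· ≤ ·) with hl2
  set L : List ℕ := l1 ++ l2 with hLdef
  have hl1len : l1.length = z - 1 := by rw [hl1, Finset.length_sort, hXcard]
  have hl1mem : ∀ b, b ∈ l1 ↔ b ∈ X := by intro b; rw [hl1, Finset.mem_sort]
  have hl2mem : ∀ b, b ∈ l2 ↔ b ∈ B₀ \ X := by intro b; rw [hl2, Finset.mem_sort]
  have hLlen : L.length = s := by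
    rw [hLdef, List.length_append, hl1len, hl2, Finset.length_sort,
      card_sdiff_of_subset hXB0, hXcard, hB₀card]
    omega
  have hLnodup : L.Nodup := by
    rw [hLdef]
    refine List.Nodup.append (Finset.sort_nodup _ _) (Finset.sort_nodup _ _) ?_
    intro b hb1 hb2
    rw [hl1mem] at hb1
    rw [hl2mem, mem_sdiff] at hb2
    exact hb2.2 hb1
  have hLmem : ∀ b, b ∈ L ↔ b ∈ B₀ := by
    intro b
    rw [hLdef, List.mem_append, hl1mem, hl2mem, mem_sdiff]
    constructor
    · rintro (h | h)
      · exact hXB0 h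
      · exact h.1
    · intro h
      by_cases hX : b ∈ X
      · exact Or.inl hX
      · exact Or.inr ⟨h, hX⟩
  set ℓ : ℕ → ℕ := fun i => L.getD i 0 with hℓdef
  have hℓget : ∀ i (h : i < s), ℓ i = L[i]'(hLlen ▸ h) := by
    intro i h
    rw [hℓdef]
    exact List.getD_eq_getElem L 0 (hLlen ▸ h)
  have hℓB0 : ∀ i < s, ℓ i ∈ B₀ := by
    intro i h
    rw [hℓget i h, ← hLmem]
    exact List.getElem_mem _
  have hℓinj : ∀ i < s, ∀ j < s, ℓ i = ℓ j → i = j := by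
    intro i hi j hj he
    rw [hℓget i hi, hℓget j hj] at he
    exact (List.Nodup.getElem_inj_iff hLnodup).mp he
  have hℓX : ∀ i < z - 1, ℓ i ∈ X := by
    intro i hi
    have hi' : i < s := lt_of_lt_of_le hi hzs
    rw [hℓget i hi']
    have : L[i]'(hLlen ▸ hi') = l1[i]'(hl1len ▸ hi) := by
      show (l1 ++ l2)[i]'_ = l1[i]'(hl1len ▸ hi)
      exact List.getElem_append_left (hl1len ▸ hi)
    rw [this, ← hl1mem]
    exact List.getElem_mem _
  have hXℓ : ∀ b ∈ X, ∃ i < z - 1, ℓ i = b := by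
    intro b hb
    rw [← hl1mem] at hb
    obtain ⟨i, hi, he⟩ := List.mem_iff_getElem.mp hb
    refine ⟨i, hl1len ▸ hi, ?_⟩
    have hi' : i < s := by rw [hl1len] at hi; omega
    rw [hℓget i hi', ← he]
    show (l1 ++ l2)[i]'_ = l1[i]'hi
    exact List.getElem_append_left hi
  have hB0ℓ : ∀ b ∈ B₀, ∃ i < s, ℓ i = b := by
    intro b hb
    rw [← hLmem] at hb
    obtain ⟨i, hi, he⟩ := List.mem_iff_getElem.mp hb
    refine ⟨i, hLlen ▸ hi, ?_⟩
    rw [hℓget i (hLlen ▸ hi), he]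
  -- the partition of maxCross
  set S : ℕ → Finset (Finset ℕ) := fun q =>
    (maxCross m k H).filter (fun F => ℓ q ∈ F ∧ ∀ i < q, ℓ i ∉ F) with hSdef
  have hmaxmem : ∀ F ∈ maxCross m k H,
      F ⊆ Finset.Icc 1 m ∧ F.card = k - 1 ∧ ∀ B ∈ H, (F ∩ B).Nonempty := by
    intro F hF
    rw [maxCross, mem_filter, mem_powersetCard] at hF
    exact ⟨hF.1.1, hF.1.2, hF.2⟩
  have hcover : maxCross m k H ⊆ (Finset.range s).biUnion S := by
    intro F hF
    rw [mem_biUnion]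
    obtain ⟨_, hFsub, hcr⟩ := hmaxmem F hF
    obtain ⟨b, hb⟩ := hcr B₀ hB₀
    rw [mem_inter] at hb
    obtain ⟨i₀, hi₀, he₀⟩ := hB0ℓ b hb.2
    set T' : Finset ℕ := (Finset.range s).filter (fun i => ℓ i ∈ F) with hT'
    have hT'ne : T'.Nonempty := ⟨i₀, by rw [hT', mem_filter, mem_range]; exact ⟨hi₀, he₀ ▸ hb.1⟩⟩
    set q := T'.min' hT'ne with hq
    have hqmem := T'.min'_mem hT'ne
    rw [mem_filter, mem_range] at hqmem
    refine ⟨q, mem_range.mpr hqmem.1, ?_⟩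
    rw [hSdef, mem_filter]
    refine ⟨hF, hqmem.2, fun i hi hiF => ?_⟩
    have : i ∈ T' := by
      rw [hT', mem_filter, mem_range]
      exact ⟨lt_trans hi hqmem.1, hiF⟩
    have := T'.min'_le i this
    omega
  have hdisjS : ∀ q1 ∈ Finset.range s, ∀ q2 ∈ Finset.range s, q1 ≠ q2 →
      Disjoint (S q1) (S q2) := by
    intro q1 _ q2 _ hne
    rw [disjoint_left]
    intro F h1 h2
    rw [hSdef, mem_filter] at h1 h2
    rcases lt_or_gt_of_ne hne with h | h
    · exact h2.2.2 q1 h h1.2.1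
    · exact h1.2.2 q2 h h2.2.1
  have hcards : (maxCross m k H).card ≤ ∑ q ∈ Finset.range s, (S q).card := by
    calc (maxCross m k H).card ≤ ((Finset.range s).biUnion S).card := card_le_card hcover
      _ = ∑ q ∈ Finset.range s, (S q).card := card_biUnion hdisjS
  -- per-index bound
  set gg : ℕ → ℤ := fun r => ((m - r).choose (k-2) : ℤ) -
    (if r ≤ z - 1 then ((m - s - 1).choose (k - 2) : ℤ)
     else ((((m : ℤ) + z - s - 2 - r).toNat).choose (k - 2) : ℤ)) with hggdef
  have hbound : ∀ q < s, ((S q).card : ℤ) ≤ gg (q + 1) := by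
    intro q hq
    set P : Finset ℕ := (Finset.range (q+1)).image ℓ with hPdef
    have hPcard : P.card = q + 1 := by
      rw [hPdef, card_image_of_injOn, card_range]
      intro i hi i' hi' he
      simp only [coe_range, Set.mem_Iio] at hi hi'
      exact hℓinj i (by omega) i' (by omega) he
    have hPIcc : P ⊆ Finset.Icc 1 m := by
      intro y hy
      rw [hPdef, mem_image] at hy
      obtain ⟨i, hi, rfl⟩ := hy
      rw [mem_range] at hi
      exact hB₀Icc (hℓB0 i (by omega))
    have hwit : ∃ j ∈ H, ℓ q ∉ j ∧
        (if q + 1 ≤ z - 1 then q else z - 2) ≤ (P ∩ j).card := by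
      by_cases hcase : q + 1 ≤ z - 1
      · have hℓqX : ℓ q ∈ X := hℓX q (by omega)
        rw [hXdef, mem_image] at hℓqX
        obtain ⟨j, hjH', hje⟩ := hℓqX
        have hjH : j ∈ H := mem_of_mem_erase hjH'
        refine ⟨j, hjH, by rw [← hje]; exact hxn j hjH, ?_⟩
        rw [if_pos hcase]
        have hsubint : (Finset.range q).image ℓ ⊆ P ∩ j := by
          intro y hy
          rw [mem_image] at hy
          obtain ⟨i, hi, rfl⟩ := hy
          rw [mem_range] at hi
          rw [mem_inter]
          constructor
          · rw [hPdef, mem_image]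
            exact ⟨i, mem_range.mpr (by omega), rfl⟩
          · have hiX : ℓ i ∈ X := hℓX i (by omega)
            rw [hXdef, mem_image] at hiX
            obtain ⟨B', hB'', hBe⟩ := hiX
            have hB' : B' ∈ H := mem_of_mem_erase hB''
            have hBj : B' ≠ j := by
              intro hc
              subst hc
              have : ℓ i = ℓ q := by rw [← hBe, hje]
              have := hℓinj i (by omega) q (by omega) this
              omega
            rw [← hBe]
            exact hxo B' hB' j hjH (Ne.symm hBj)
        have hci : ((Finset.range q).image ℓ).card = q := by
          rw [card_image_of_injOn, card_range]
          intro i hi i' hi' he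
          simp only [coe_range, Set.mem_Iio] at hi hi'
          exact hℓinj i (by omega) i' (by omega) he
        calc q = ((Finset.range q).image ℓ).card := hci.symm
          _ ≤ (P ∩ j).card := card_le_card hsubint
      · have hzq : z - 1 ≤ q := by omega
        have hℓqB : ℓ q ∈ B₀ := hℓB0 q hq
        obtain ⟨j, hjH, hjq⟩ : ∃ j ∈ H, ℓ q ∉ j := by
          by_contra hc
          push_neg at hc
          have : ℓ q ∈ famInter m H := mem_famInter.mpr ⟨hB₀Icc hℓqB, hc⟩
          rw [hempty] at this
          exact absurd this (Finset.notMem_empty _)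
        have hjB0 : j ≠ B₀ := fun h => hjq (h ▸ hℓqB)
        refine ⟨j, hjH, hjq, ?_⟩
        rw [if_neg hcase]
        have hsubint : X.erase (x j) ⊆ P ∩ j := by
          intro y hy
          rw [mem_erase] at hy
          obtain ⟨hyne, hyX⟩ := hy
          rw [mem_inter]
          constructor
          · obtain ⟨i, hi, he⟩ := hXℓ y hyX
            rw [hPdef, mem_image]
            exact ⟨i, mem_range.mpr (by omega), he⟩
          · have hyX' := hyX
            rw [hXdef, mem_image] at hyX'
            obtain ⟨B', hB'', hBe⟩ := hyX'
            have hB' : B' ∈ H := mem_of_mem_erase hB''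
            have hBj : B' ≠ j := by
              intro hc
              subst hc
              exact hyne hBe.symm
            rw [← hBe]
            exact hxo B' hB' j hjH (Ne.symm hBj)
        calc z - 2 ≤ (X.erase (x j)).card := by
              have := Finset.pred_card_le_card_erase (s := X) (a := x j)
              omega
          _ ≤ (P ∩ j).card := card_le_card hsubint
    obtain ⟨j, hjH, hjq, hjint⟩ := hwit
    have hjIcc : j ⊆ Finset.Icc 1 m := (hsub j hjH).1
    have hjcard : j.card = s := (hsub j hjH).2
    have hcount := helperCount m k (by omega) (S q) (ℓ q) P j hjq ?_
    swap
    · intro F hF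
      rw [hSdef, mem_filter] at hF
      obtain ⟨hFmax, hℓqF, hFnot⟩ := hF
      obtain ⟨hFsub, hFcard, hcr⟩ := hmaxmem F hFmax
      refine ⟨hFsub, hFcard, hℓqF, ?_, ?_⟩
      · obtain ⟨b, hb⟩ := hcr j hjH
        exact ⟨b, hb⟩
      · intro y hyF hyne hyP
        rw [hPdef, mem_image] at hyP
        obtain ⟨i, hi, rfl⟩ := hyP
        rw [mem_range] at hi
        rcases Nat.lt_or_ge i q with h | h
        · exact hFnot i h hyF
        · have : i = q := by omega
          exact hyne (by rw [this])
    set u : ℕ := (P ∪ j).card with hu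
    have hu1 : u + (P ∩ j).card = (q + 1) + s := by
      rw [hu, card_union_add_card_inter, hPcard, hjcard]
    have hum : u ≤ m := by
      have := card_le_card (union_subset hPIcc hjIcc)
      rw [Nat.card_Icc] at this
      omega
    have h1 : (Finset.Icc 1 m \ P).card = m - (q + 1) := by
      rw [card_sdiff_of_subset hPIcc, Nat.card_Icc, hPcard]
      omega
    have h2 : (Finset.Icc 1 m \ (P ∪ j)).card = m - u := by
      rw [card_sdiff_of_subset (union_subset hPIcc hjIcc), Nat.card_Icc]
      omega
    rw [h1, h2] at hcount
    rw [hggdef]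
    simp only
    by_cases hcase : q + 1 ≤ z - 1
    · rw [if_pos hcase] at hjint ⊢
      have huz : u ≤ s + 1 := by omega
      have hmono : (m - s - 1).choose (k-2) ≤ (m - u).choose (k-2) :=
        Nat.choose_le_choose _ (by omega)
      have hc' : ((S q).card : ℤ) + ((m - u).choose (k-2) : ℤ) ≤ ((m - (q+1)).choose (k-2) : ℤ) := by
        exact_mod_cast hcount
      have hm' : ((m - s - 1).choose (k-2) : ℤ) ≤ ((m - u).choose (k-2) : ℤ) := by
        exact_mod_cast hmono
      linarith
    · rw [if_neg hcase] at hjint ⊢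
      have h3 : ((m : ℤ) + z - s - 2 - (q + 1 : ℕ)).toNat ≤ m - u := by
        omega
      have hmono : ((m : ℤ) + z - s - 2 - (q + 1 : ℕ)).toNat.choose (k-2) ≤ (m - u).choose (k-2) :=
        Nat.choose_le_choose _ h3
      have hc' : ((S q).card : ℤ) + ((m - u).choose (k-2) : ℤ) ≤ ((m - (q+1)).choose (k-2) : ℤ) := by
        exact_mod_cast hcount
      have hm' : ((((m : ℤ) + z - s - 2 - (q + 1 : ℕ)).toNat).choose (k-2) : ℤ) ≤ ((m - u).choose (k-2) : ℤ) := by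
        exact_mod_cast hmono
      linarith
  -- summing up
  have hsum1 : ((maxCross m k H).card : ℤ) ≤ ∑ q ∈ Finset.range s, gg (q + 1) := by
    calc ((maxCross m k H).card : ℤ) ≤ ∑ q ∈ Finset.range s, ((S q).card : ℤ) := by
          exact_mod_cast hcards
      _ ≤ ∑ q ∈ Finset.range s, gg (q + 1) :=
          Finset.sum_le_sum fun q hqr => hbound q (mem_range.mp hqr)
  have hreindex : ∑ q ∈ Finset.range s, gg (q + 1) = ∑ r ∈ Finset.Icc 1 s, gg r := by
    refine Finset.sum_nbij' (fun q => q + 1) (fun r => r - 1) ?_ ?_ ?_ ?_ ?_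
    · intro a ha; rw [mem_range] at ha; show a + 1 ∈ Finset.Icc 1 s; rw [mem_Icc]; omega
    · intro a ha; rw [mem_Icc] at ha; show a - 1 ∈ Finset.range s; rw [mem_range]; omega
    · intro a ha; show a + 1 - 1 = a; omega
    · intro a ha; rw [mem_Icc] at ha; show a - 1 + 1 = a; omega
    · intro a ha; rfl
  have hsplit : Finset.Icc 1 s = Finset.Icc 1 (z-1) ∪ Finset.Icc z s := by
    ext r
    simp only [mem_Icc, mem_union]
    omega
  have hd : Disjoint (Finset.Icc 1 (z-1)) (Finset.Icc z s) := by
    rw [disjoint_left]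
    intro r h1' h2'
    rw [mem_Icc] at h1' h2'
    omega
  have hfin : ∑ r ∈ Finset.Icc 1 s, gg r =
      (∑ q ∈ Finset.Icc 1 (z - 1),
        (((m - q).choose (k - 2) : ℤ) - ((m - s - 1).choose (k - 2) : ℤ))) +
      (∑ q ∈ Finset.Icc z s,
        (((m - q).choose (k - 2) : ℤ) -
          ((((m : ℤ) + z - s - 2 - q).toNat).choose (k - 2) : ℤ))) := by
    rw [hsplit, Finset.sum_union hd]
    congr 1
    · apply Finset.sum_congr rfl
      intro r hr
      rw [mem_Icc] at hr
      rw [hggdef]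
      simp only
      rw [if_pos hr.2]
    · apply Finset.sum_congr rfl
      intro r hr
      rw [mem_Icc] at hr
      rw [hggdef]
      simp only
      rw [if_neg (by omega)]
  exact hsum1.trans (le_of_eq (hreindex.trans hfin))
end

section
/- Let k ≥ 4 and n ≥ 2k. Then |J_1| − |J_2| = C(n−k−2, k−2) − 1, and for every i with 2 ≤ i ≤ k−1, |J_i| − |J_{i+1}| = C(n−k−i−1, k−2). Consequently, |J_1| > |J_2| whenever n ≥ 2k+1, |J_i| > |J_{i+1}| whenever n ≥ 2k+i−1 and i ≥ 2, and |J_i| = |J_{i+1}| whenever 2k ≤ n < 2k+i−1 and i ≥ 2. -/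
/-- `I_i = [i+1, k+i]`. -/
def Iset (k i : ℕ) : Finset ℕ := Finset.Icc (i + 1) (k + i)

/-- The family `J_i = {I_1, I_i} ∪ {F ∈ C([n],k) : 1 ∈ F, F ∩ I_1 ≠ ∅, F ∩ I_i ≠ ∅}`. -/
def Jfam (n k i : ℕ) : Finset (Finset ℕ) :=
  {Iset k 1, Iset k i} ∪
    (Finset.powersetCard k (Finset.Icc 1 n)).filter
      (fun A => 1 ∈ A ∧ (A ∩ Iset k 1).Nonempty ∧ (A ∩ Iset k i).Nonempty)

/-!
A member of the filtered part of `J_i` contains `1`, so it is neither `I_1` nor `I_i`. The `k`-sets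
through `1` avoiding a set `T ⊆ [2, n]` number `C(n - 1 - |T|, k - 1)`, and `I_1 ∪ I_i = [2, k + i]`,
so inclusion–exclusion gives
`|J_i| = C(n-1, k-1) - 2 C(n-k-1, k-1) + C(n-k-i, k-1) + |{I_1, I_i}|`.
Pascal's rule turns consecutive differences into `C(n-k-i-1, k-2)`, and the extra `-1` for `i = 1`
comes from `I_1 = I_i`.
-/

open Finset

section Counting

variable {α : Type*} [DecidableEq α]

theorem card_filter_not_and_not_add (s : Finset α) (p q : α → Prop) [DecidablePred p]
    [DecidablePred q] :
    #{x ∈ s | ¬p x ∧ ¬q x} + #(s.filter p) + #(s.filter q) = #s + #{x ∈ s | p x ∧ q x} := by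
  have hsplit := card_filter_add_card_filter_not (s := s) (fun x => p x ∨ q x)
  have hunion := card_union_add_card_inter (s.filter p) (s.filter q)
  rw [← filter_or, ← filter_and] at hunion
  simp only [not_or] at hsplit
  omega

theorem card_filter_powersetCard_mem_disjoint {s T : Finset α} {a : α} (ha : a ∈ s)
    (haT : a ∉ T) {k : ℕ} (hk : 1 ≤ k) :
    #{A ∈ s.powersetCard k | a ∈ A ∧ Disjoint A T} = (#(s \ T) - 1).choose (k - 1) := by
  have hfilter : {A ∈ s.powersetCard k | a ∈ A ∧ Disjoint A T}
      = {A ∈ (s \ T).powersetCard k | {a} ⊆ A} := by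
    ext A
    simp only [mem_filter, mem_powersetCard, subset_sdiff, singleton_subset_iff]
    tauto
  rw [hfilter, card_filter_powersetCard_subset _ _ _ (by simp [ha, haT]) (by simpa using hk),
    card_singleton]

end Counting

lemma one_notMem_Iset (k : ℕ) {i : ℕ} (hi : 1 ≤ i) : 1 ∉ Iset k i := by
  simp only [Iset, mem_Icc]
  omega

lemma card_Iset (k i : ℕ) : #(Iset k i) = k := by
  simp only [Iset, Nat.card_Icc]
  omega

lemma Iset_subset_Icc {n k i : ℕ} (hi : 1 ≤ i) (hn : k + i ≤ n) : Iset k i ⊆ Icc 2 n := by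
  intro x hx
  simp only [Iset, mem_Icc] at hx ⊢
  omega

lemma Iset_one_union {k i : ℕ} (hi : 1 ≤ i) (hik : i ≤ k + 1) :
    Iset k 1 ∪ Iset k i = Icc 2 (k + i) := by
  ext x
  simp only [Iset, mem_union, mem_Icc]
  omega

lemma Iset_one_ne {k i : ℕ} (hk : 1 ≤ k) (hi : 2 ≤ i) : Iset k 1 ≠ Iset k i := by
  intro h
  have h2 : 2 ∈ Iset k 1 := by simp only [Iset, mem_Icc]; omega
  rw [h] at h2
  simp only [Iset, mem_Icc] at h2
  omega

/-- The part of `J_i` other than `I_1` and `I_i`. -/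
def JfamCore (n k i : ℕ) : Finset (Finset ℕ) :=
  {A ∈ (Icc 1 n).powersetCard k | 1 ∈ A ∧ (A ∩ Iset k 1).Nonempty ∧ (A ∩ Iset k i).Nonempty}

lemma card_filter_one_mem_disjoint {n k : ℕ} (hn : 1 ≤ n) (hk : 1 ≤ k) {T : Finset ℕ}
    (hT : T ⊆ Icc 2 n) :
    #{A ∈ (Icc 1 n).powersetCard k | 1 ∈ A ∧ Disjoint A T} = (n - #T - 1).choose (k - 1) := by
  have hT' : T ⊆ Icc 1 n := hT.trans (Icc_subset_Icc_left (by norm_num))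
  rw [card_filter_powersetCard_mem_disjoint (by simpa using hn) (fun h => by simpa using hT h) hk,
    card_sdiff_of_subset hT', Nat.card_Icc, Nat.add_sub_cancel]

lemma card_JfamCore_add {n k i : ℕ} (hk : 1 ≤ k) (hi : 1 ≤ i) (hik : i ≤ k + 1)
    (hn : k + i ≤ n) :
    #(JfamCore n k i) + 2 * (n - k - 1).choose (k - 1)
      = (n - 1).choose (k - 1) + (n - k - i).choose (k - 1) := by
  have hIE := card_filter_not_and_not_add {A ∈ (Icc 1 n).powersetCard k | 1 ∈ A}
    (fun A => Disjoint A (Iset k 1)) (fun A => Disjoint A (Iset k i))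
  simp only [filter_filter, ← disjoint_union_right, Iset_one_union hi hik] at hIE
  have hall := card_filter_one_mem_disjoint (by omega) hk (empty_subset (Icc 2 n))
  simp only [disjoint_empty_right, and_true, card_empty, Nat.sub_zero] at hall
  rw [hall, card_filter_one_mem_disjoint (by omega) hk (Iset_subset_Icc le_rfl (by omega)),
    card_filter_one_mem_disjoint (by omega) hk (Iset_subset_Icc hi hn),
    card_filter_one_mem_disjoint (by omega) hk (Icc_subset_Icc_right hn), card_Iset, card_Iset,
    Nat.card_Icc] at hIE
  simp only [JfamCore, ← not_disjoint_iff_nonempty_inter]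
  have : n - (k + i + 1 - 2) - 1 = n - k - i := by omega
  rw [this] at hIE
  omega

lemma card_Jfam (n k : ℕ) {i : ℕ} (hi : 1 ≤ i) :
    #(Jfam n k i) = #({Iset k 1, Iset k i} : Finset (Finset ℕ)) + #(JfamCore n k i) := by
  refine card_union_of_disjoint (disjoint_left.2 ?_)
  simp only [mem_insert, mem_singleton, mem_filter]
  rintro A (rfl | rfl) ⟨-, h1, -⟩
  exacts [one_notMem_Iset k le_rfl h1, one_notMem_Iset k hi h1]

lemma card_Jfam_one_add {n k : ℕ} (hk : 1 ≤ k) (hn : k + 1 ≤ n) :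
    #(Jfam n k 1) + (n - k - 1).choose (k - 1) = (n - 1).choose (k - 1) + 1 := by
  have hcore := card_JfamCore_add hk le_rfl (by omega) hn
  rw [card_Jfam n k le_rfl, pair_eq_singleton, card_singleton]
  omega

lemma card_Jfam_add {n k i : ℕ} (hk : 1 ≤ k) (hi : 2 ≤ i) (hik : i ≤ k + 1) (hn : k + i ≤ n) :
    #(Jfam n k i) + 2 * (n - k - 1).choose (k - 1)
      = (n - 1).choose (k - 1) + (n - k - i).choose (k - 1) + 2 := by
  have hcore := card_JfamCore_add hk (by omega) hik hn
  rw [card_Jfam n k (by omega), card_pair (Iset_one_ne hk hi)]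
  omega

lemma card_Jfam_one_sub_card_Jfam_two {n k : ℕ} (hk : 2 ≤ k) (hn : k + 2 ≤ n) :
    (#(Jfam n k 1) : ℤ) - #(Jfam n k 2) = (n - k - 2).choose (k - 2) - 1 := by
  have hJ1 := card_Jfam_one_add (n := n) (k := k) (by omega) (by omega)
  have hJ2 := card_Jfam_add (n := n) (k := k) (by omega) le_rfl (by omega) hn
  have hpascal := Nat.choose_eq_choose_pred_add (n := n - k - 1) (k := k - 1) (by omega) (by omega)
  rw [show n - k - 1 - 1 = n - k - 2 by omega, show k - 1 - 1 = k - 2 by omega] at hpascal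
  omega

lemma card_Jfam_sub_card_Jfam_succ {n k i : ℕ} (hk : 2 ≤ k) (hi : 2 ≤ i) (hik : i ≤ k)
    (hn : k + i + 1 ≤ n) :
    (#(Jfam n k i) : ℤ) - #(Jfam n k (i + 1)) = (n - k - i - 1).choose (k - 2) := by
  have hJi := card_Jfam_add (n := n) (k := k) (by omega) hi (by omega) (by omega)
  have hJi' := card_Jfam_add (n := n) (k := k) (i := i + 1) (by omega) (by omega) (by omega) hn
  have hpascal := Nat.choose_eq_choose_pred_add (n := n - k - i) (k := k - 1) (by omega) (by omega)
  rw [show k - 1 - 1 = k - 2 by omega] at hpascal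
  rw [show n - k - (i + 1) = n - k - i - 1 by omega] at hJi'
  omega

theorem stmt18 (n k : ℕ) (hk : 4 ≤ k) (hn : 2 * k ≤ n) :
    ((Jfam n k 1).card : ℤ) - ((Jfam n k 2).card : ℤ)
        = ((n - k - 2).choose (k - 2) : ℤ) - 1 ∧
    (∀ i : ℕ, 2 ≤ i → i ≤ k - 1 →
      ((Jfam n k i).card : ℤ) - ((Jfam n k (i + 1)).card : ℤ)
        = ((n - k - i - 1).choose (k - 2) : ℤ)) ∧
    (2 * k + 1 ≤ n → (Jfam n k 2).card < (Jfam n k 1).card) ∧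
    (∀ i : ℕ, 2 ≤ i → i ≤ k - 1 → 2 * k + i - 1 ≤ n →
      (Jfam n k (i + 1)).card < (Jfam n k i).card) ∧
    (∀ i : ℕ, 2 ≤ i → i ≤ k - 1 → n < 2 * k + i - 1 →
      (Jfam n k i).card = (Jfam n k (i + 1)).card) := by
  have hdiff₁ := card_Jfam_one_sub_card_Jfam_two (n := n) (k := k) (by omega) (by omega)
  have hdiff : ∀ i, 2 ≤ i → i ≤ k - 1 → (#(Jfam n k i) : ℤ) - #(Jfam n k (i + 1))
      = (n - k - i - 1).choose (k - 2) := fun i hi hik =>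
    card_Jfam_sub_card_Jfam_succ (by omega) hi (by omega) (by omega)
  refine ⟨hdiff₁, hdiff, fun hn' => ?_, fun i hi hik hn' => ?_, fun i hi hik hn' => ?_⟩
  · have hchoose : k - 1 ≤ (n - k - 2).choose (k - 2) := calc
      k - 1 = (k - 2 + 1).choose (k - 2) := by rw [Nat.choose_succ_self_right]; omega
      _ ≤ (n - k - 2).choose (k - 2) := Nat.choose_le_choose _ (by omega)
    omega
  · have := hdiff i hi hik
    have := Nat.choose_pos (n := n - k - i - 1) (k := k - 2) (by omega)
    omega
  · have := hdiff i hi hik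
    have := Nat.choose_eq_zero_of_lt (n := n - k - i - 1) (k := k - 2) (by omega)
    omega
end

section
/- Let n > 2k ≥ 8 and i ∈ {2,3,4}. Let K be a family of (k−i+2)-element subsets of [i+1,n] = {i+1,…,n}. If |K| > C(n−5, k−3), then |K| + |∂K| > C(n−4, k−3), where ∂K denotes the shadow of K. -/
open Finset

lemma shadow_double_count (S : Finset ℕ) (r : ℕ) (hr : 1 ≤ r) (K : Finset (Finset ℕ))
    (hK : K ⊆ Finset.powersetCard r S) :
    K.card * r ≤ K.shadow.card * (S.card - r + 1) := by
  classical
  have hsized : (K : Set (Finset ℕ)).Sized r := fun A hA =>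
    (Finset.mem_powersetCard.1 (hK hA)).2
  refine Finset.card_mul_le_card_mul' (· ⊆ ·) (fun B hB => ?_) (fun a ha => ?_)
  · rw [← hsized hB, ← Finset.card_image_of_injOn B.erase_injOn]
    refine Finset.card_le_card ?_
    simp_rw [Finset.image_subset_iff, Finset.mem_bipartiteBelow]
    exact fun x hx => ⟨Finset.erase_mem_shadow hB hx, Finset.erase_subset _ _⟩
  · refine le_trans ?_ tsub_tsub_le_tsub_add
    have haS : a ⊆ S := by
      obtain ⟨B, hB, x, hx, rfl⟩ := Finset.mem_shadow_iff.1 ha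
      exact (Finset.erase_subset _ _).trans (Finset.mem_powersetCard.1 (hK hB)).1
    have hacard : a.card = r - 1 := hsized.shadow ha
    calc (K.bipartiteAbove (· ⊆ ·) a).card
        ≤ ((S \ a).image (fun x => insert x a)).card := by
          refine Finset.card_le_card fun B hB => ?_
          rw [Finset.mem_bipartiteAbove] at hB
          obtain ⟨hBK, haB⟩ := hB
          have hBcard : a.card + 1 = B.card := by
            rw [hacard, hsized hBK]; omega
          obtain ⟨x, hxa, rfl⟩ := Finset.exists_eq_insert_iff.2 ⟨haB, hBcard⟩
          have hxS : x ∈ S := (Finset.mem_powersetCard.1 (hK hBK)).1 (Finset.mem_insert_self _ _)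
          exact Finset.mem_image.2 ⟨x, Finset.mem_sdiff.2 ⟨hxS, hxa⟩, rfl⟩
      _ ≤ (S \ a).card := Finset.card_image_le
      _ ≤ S.card - (r - 1) := by rw [Finset.card_sdiff_of_subset haS, hacard]

theorem stmt19 (n k i : ℕ) (hk : 8 ≤ 2 * k) (hn : 2 * k < n)
    (hi : i = 2 ∨ i = 3 ∨ i = 4)
    (K : Finset (Finset ℕ))
    (hK : K ⊆ Finset.powersetCard (k - i + 2) (Finset.Icc (i + 1) n))
    (hcard : (n - 5).choose (k - 3) < K.card) :
    (n - 4).choose (k - 3) < K.card + K.shadow.card := by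
  have hk4 : 4 ≤ k := by omega
  have hi4 : i ≤ 4 := by omega
  have hn9 : 2 * k + 1 ≤ n := hn
  have hdc := shadow_double_count (Finset.Icc (i + 1) n) (k - i + 2) (by omega) K hK
  have hScard : (Finset.Icc (i + 1) n).card = n - i := by
    rw [Nat.card_Icc]; omega
  rw [hScard] at hdc
  have hdc' : K.card * (k - i + 2) ≤ K.shadow.card * (n - k - 1) := by
    have : n - i - (k - i + 2) + 1 = n - k - 1 := by omega
    rwa [this] at hdc
  -- Binomial identity: C(n-5,k-3)*(n-4) = C(n-4,k-3)*(n-k-1)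
  have hbin : (n - 5).choose (k - 3) * (n - 4) = (n - 4).choose (k - 3) * (n - k - 1) := by
    have h := Nat.choose_mul_succ_eq (n - 5) (k - 3)
    have e1 : n - 5 + 1 = n - 4 := by omega
    have e2 : n - 4 - (k - 3) = n - k - 1 := by omega
    rw [e1, e2] at h
    exact h
  -- Main estimate
  set c := K.card with hc
  set d := K.shadow.card with hd
  set E := (n - 5).choose (k - 3) with hE
  set D := (n - 4).choose (k - 3) with hD
  have h2 : (n - k - 1) + (k - i + 2) = n - i + 1 := by omega
  have h3 : E * (n - 4) < c * (n - i + 1) := by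
    have e : n - i + 1 = (n - 4) + (5 - i) := by omega
    have e2 : 1 ≤ 5 - i := by omega
    have : (E + 1) * ((n - 4) + (5 - i)) = E * (n - 4) + (E * (5 - i) + (n - 4) + (5 - i)) := by
      ring
    have h4 : E * (n - 4) < (E + 1) * ((n - 4) + (5 - i)) := by
      rw [this]; linarith [Nat.zero_le (E * (5 - i)), Nat.zero_le (n - 4)]
    calc E * (n - 4) < (E + 1) * ((n - 4) + (5 - i)) := h4
      _ ≤ c * ((n - 4) + (5 - i)) := Nat.mul_le_mul_right _ (by omega)
      _ = c * (n - i + 1) := by rw [← e]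
  have hkey : D * (n - k - 1) < (c + d) * (n - k - 1) := by
    have expand : c * (n - k - 1) + c * (k - i + 2) = c * (n - i + 1) := by
      rw [← Nat.mul_add, h2]
    have h1 : c * (n - i + 1) ≤ (c + d) * (n - k - 1) := by
      rw [← expand, Nat.add_mul]
      exact Nat.add_le_add_left hdc' _
    calc D * (n - k - 1) = E * (n - 4) := hbin.symm
      _ < c * (n - i + 1) := h3
      _ ≤ (c + d) * (n - k - 1) := h1
  exact lt_of_mul_lt_mul_right hkey (Nat.zero_le _)
end
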